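/- Suppose gcd(N, p) = 1 and let d be a positive divisor of N with gcd(d, N/d) = 1. Then U_d ∩ S₀(n,N)^± and the set of integer matrices in U_d have the same image under reduction modulo p; that is, for every integer matrix u ∈ U_d there exists u′ ∈ U_d ∩ S₀(n,N)^± with u′ ≡ u (mod p). -/

import Mathlib

open Matrix

/-- `g_x` over `ℤ`: the identity matrix with its `(1,2)` entry replaced by `x`. -/
def gmatZ (n : ℕ) (x : ℤ) : Matrix (Fin (n + 2)) (Fin (n + 2)) ℤ :=
  1 + x • Matrix.single 0 1 1

/-- Conjugation `g_d s g_d⁻¹` (note `g_d⁻¹ = g_{-d}`). -/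
def conjd (n : ℕ) (d : ℤ) (s : Matrix (Fin (n + 2)) (Fin (n + 2)) ℤ) :
    Matrix (Fin (n + 2)) (Fin (n + 2)) ℤ :=
  gmatZ n d * s * gmatZ n (-d)

/-- `S₀(m+1,N)^±`: integer matrices with nonzero determinant relatively prime to `pN`
whose first row is `≡ (∗,0,…,0) (mod N)`. -/
def S0pm (p N : ℕ) {m : ℕ} : Set (Matrix (Fin (m + 1)) (Fin (m + 1)) ℤ) :=
  {s | s.det ≠ 0 ∧ Int.gcd s.det (p * N) = 1 ∧ ∀ j : Fin (m + 1), j ≠ 0 → (N : ℤ) ∣ s 0 j}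

/-- `ψ_d¹(s)`: the `(1,1)` entry of `g_d s g_d⁻¹`. -/
def psi1 (n : ℕ) (d : ℤ) (s : Matrix (Fin (n + 2)) (Fin (n + 2)) ℤ) : ℤ :=
  conjd n d s 0 0

/-- `ψ_d²(s)`: the lower-right `(n-1)×(n-1)` block of `g_d s g_d⁻¹`. -/
def psi2 (n : ℕ) (d : ℤ) (s : Matrix (Fin (n + 2)) (Fin (n + 2)) ℤ) :
    Matrix (Fin (n + 1)) (Fin (n + 1)) ℤ :=
  Matrix.of fun i j => conjd n d s i.succ j.succ

/-- `U_d = g_d⁻¹ U₀ g_d` (integral points): `g_d u g_d⁻¹` agrees with the identity matrix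
except in the first column below the `(1,1)` entry. -/
def memUd (n : ℕ) (d : ℤ) (u : Matrix (Fin (n + 2)) (Fin (n + 2)) ℤ) : Prop :=
  ∀ i j : Fin (n + 2), ¬(j = 0 ∧ i ≠ 0) →
    conjd n d u i j = (1 : Matrix (Fin (n + 2)) (Fin (n + 2)) ℤ) i j

/-! Conjugating by `g_d` identifies `U_d` with `U₀`, the lower unitriangular matrices supported
on the first column. For `v ∈ U₀` the first row of `g_d⁻¹ v g_d` is `(1 - d a, -d² a, 0, …, 0)`
with `a = v₂₁`, and its determinant is `1`; so it lies in `S₀(n,N)^±` as soon as `N/d ∣ a`.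
Since `gcd(N/d, p) = 1`, adding a multiple of `p` to the `(2,1)` entry of `g_d u g_d⁻¹` achieves
this without changing `u` modulo `p`. -/

def IsU0 {R : Type*} [Zero R] [One R] {m : ℕ} (v : Matrix (Fin (m + 1)) (Fin (m + 1)) R) :
    Prop :=
  ∀ i j, ¬(j = 0 ∧ i ≠ 0) → v i j = (1 : Matrix (Fin (m + 1)) (Fin (m + 1)) R) i j

namespace IsU0

variable {R : Type*} [CommRing R] {m : ℕ} {v : Matrix (Fin (m + 1)) (Fin (m + 1)) R}

lemma apply_zero_of_ne (hv : IsU0 v) {j : Fin (m + 1)} (hj : j ≠ 0) : v 0 j = 0 := by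
  rw [hv 0 j (by simp [hj]), one_apply_ne hj.symm]

lemma apply_self (hv : IsU0 v) (i : Fin (m + 1)) : v i i = 1 := by
  rw [hv i i (by simp), one_apply_eq]

lemma det_eq_one (hv : IsU0 v) : v.det = 1 := by
  have hlower : v.IsLowerTriangular := by
    intro i j (hij : i < j)
    rw [hv i j (by simp [(i.zero_le.trans_lt hij).ne']), one_apply_ne hij.ne]
  rw [det_of_isLowerTriangular v hlower]
  simp [hv.apply_self]

lemma add_single (hv : IsU0 v) {i : Fin (m + 1)} (hi : i ≠ 0) (t : R) :
    IsU0 (v + single i 0 t) := by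
  intro k j hkj
  have : single i 0 t k j = 0 := by
    rw [single_apply_of_ne]
    rintro ⟨rfl, rfl⟩
    exact hkj ⟨rfl, hi⟩
  rw [Matrix.add_apply, this, add_zero, hv k j hkj]

end IsU0

section Conjugation

variable (n : ℕ)

lemma gmatZ_add (x y : ℤ) : gmatZ n (x + y) = gmatZ n x * gmatZ n y := by
  have hsq : (single 0 1 1 * single 0 1 1 : Matrix (Fin (n + 2)) (Fin (n + 2)) ℤ) = 0 :=
    single_mul_single_of_ne 1 0 1 0 one_ne_zero 1
  simp only [gmatZ, add_mul, mul_add, one_mul, mul_one, Matrix.smul_mul, Matrix.mul_smul, hsq,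
    smul_zero]
  module

lemma gmatZ_mul_gmatZ_neg (x : ℤ) : gmatZ n x * gmatZ n (-x) = 1 := by
  rw [← gmatZ_add, add_neg_cancel, gmatZ, zero_smul, add_zero]

lemma conjd_conjd_neg (x : ℤ) (A : Matrix (Fin (n + 2)) (Fin (n + 2)) ℤ) :
    conjd n x (conjd n (-x) A) = A := by
  simp only [conjd, neg_neg, ← mul_assoc, gmatZ_mul_gmatZ_neg, one_mul]
  rw [mul_assoc, gmatZ_mul_gmatZ_neg, mul_one]

lemma conjd_neg_conjd (x : ℤ) (A : Matrix (Fin (n + 2)) (Fin (n + 2)) ℤ) :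
    conjd n (-x) (conjd n x A) = A := by
  simpa using conjd_conjd_neg n (-x) A

lemma conjd_add (x : ℤ) (A B : Matrix (Fin (n + 2)) (Fin (n + 2)) ℤ) :
    conjd n x (A + B) = conjd n x A + conjd n x B := by
  simp only [conjd, mul_add, add_mul]

lemma conjd_smul (x t : ℤ) (A : Matrix (Fin (n + 2)) (Fin (n + 2)) ℤ) :
    conjd n x (t • A) = t • conjd n x A := by
  simp only [conjd, Matrix.mul_smul, Matrix.smul_mul]

lemma det_conjd (x : ℤ) (A : Matrix (Fin (n + 2)) (Fin (n + 2)) ℤ) :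
    (conjd n x A).det = A.det := by
  rw [conjd, det_mul, det_mul, mul_right_comm, ← det_mul, gmatZ_mul_gmatZ_neg, det_one, one_mul]

lemma IsU0.conjd_neg_apply_zero {v : Matrix (Fin (n + 2)) (Fin (n + 2)) ℤ} (hv : IsU0 v)
    (x : ℤ) {j : Fin (n + 2)} (hj : j ≠ 0) :
    conjd n (-x) v 0 j = if j = 1 then -(x * x * v 1 0) else 0 := by
  rcases eq_or_ne j 1 with rfl | hj1
  · simp [conjd, gmatZ, add_mul, mul_add, hv.apply_zero_of_ne hj, hv.apply_self]
    ring
  · simp [conjd, gmatZ, add_mul, mul_add, hv.apply_zero_of_ne hj, hv 1 j (by simp [hj]),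
      one_apply_ne hj1.symm, hj1, hj1.symm]

end Conjugation

lemma conjd_neg_mem_S0pm {p N d n : ℕ} (hdvd : d ∣ N) {v : Matrix (Fin (n + 2)) (Fin (n + 2)) ℤ}
    (hv : IsU0 v) (hv10 : ((N / d : ℕ) : ℤ) ∣ v 1 0) : conjd n (-d) v ∈ S0pm p N := by
  have hdet : (conjd n (-d) v).det = 1 := by rw [det_conjd, hv.det_eq_one]
  refine ⟨by simp [hdet], by simp [hdet], fun j hj => ?_⟩
  rw [hv.conjd_neg_apply_zero n d hj]
  split_ifs
  · have hN : (N : ℤ) = d * (N / d : ℕ) := by exact_mod_cast (Nat.mul_div_cancel' hdvd).symm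
    rw [hN, dvd_neg, mul_assoc]
    exact mul_dvd_mul_left _ (hv10.mul_left _)
  · exact dvd_zero _

lemma exists_dvd_and_dvd_add_of_isCoprime {m q : ℤ} (h : IsCoprime m q) (c : ℤ) :
    ∃ t, q ∣ t ∧ m ∣ c + t := by
  obtain ⟨a, b, hab⟩ := h
  exact ⟨-c * b * q, dvd_mul_left _ _, c * a, by linear_combination (-c) * hab⟩

theorem stmt18_general (p : ℕ) (n N d : ℕ) (hNp : Nat.gcd N p = 1)
    (hdvd : d ∣ N)
    (u : Matrix (Fin (n + 2)) (Fin (n + 2)) ℤ) (hu : memUd n (d : ℤ) u) :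
    ∃ u' : Matrix (Fin (n + 2)) (Fin (n + 2)) ℤ,
      memUd n (d : ℤ) u' ∧ u' ∈ S0pm p N ∧ ∀ i j, (p : ℤ) ∣ (u' i j - u i j) := by
  set v := conjd n d u
  have hcop : IsCoprime ((N / d : ℕ) : ℤ) p :=
    Nat.isCoprime_iff_coprime.mpr (Nat.Coprime.coprime_dvd_left (Nat.div_dvd_of_dvd hdvd) hNp)
  obtain ⟨t, hpt, hMt⟩ := exists_dvd_and_dvd_add_of_isCoprime hcop (v 1 0)
  have hv' : IsU0 (v + single 1 0 t) := IsU0.add_single hu one_ne_zero t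
  have hdiff : conjd n (-d) (v + single 1 0 t) = u + t • conjd n (-d) (single 1 0 1) := by
    rw [conjd_add, conjd_neg_conjd, ← conjd_smul, smul_single, smul_eq_mul, mul_one]
  refine ⟨conjd n (-d) (v + single 1 0 t), ?_, conjd_neg_mem_S0pm hdvd hv' ?_, fun i j => ?_⟩
  · show IsU0 (conjd n d (conjd n (-d) _))
    rwa [conjd_conjd_neg]
  · simpa using hMt
  · rw [hdiff, Matrix.add_apply, add_sub_cancel_left, Matrix.smul_apply, smul_eq_mul]
    exact hpt.mul_right _

/-- if `gcd(N,p) = 1` then `U_d ∩ S₀(n,N)^±` and the integer matrices of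
`U_d` have the same image modulo `p`: every integral `u ∈ U_d` is congruent mod `p` to
some `u' ∈ U_d ∩ S₀(n,N)^±`. -/
theorem stmt18 (p : ℕ) (hp : p.Prime) (n N d : ℕ) (hN : 0 < N) (hNp : Nat.gcd N p = 1)
    (hd : 0 < d) (hdvd : d ∣ N) (hgcd : Nat.gcd d (N / d) = 1)
    (u : Matrix (Fin (n + 2)) (Fin (n + 2)) ℤ) (hu : memUd n (d : ℤ) u) :
    ∃ u' : Matrix (Fin (n + 2)) (Fin (n + 2)) ℤ,
      memUd n (d : ℤ) u' ∧ u' ∈ S0pm p N ∧ ∀ i j, (p : ℤ) ∣ (u' i j - u i j) :=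
  stmt18_general p n N d hNp hdvd u hu
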